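/- Let G = (V,E) be a graph, F ⊆ V with |F| ≤ f, and (L, C, R) an F-partition such that neither R ∪ C →(f+1) L \ F nor L ∪ C →(f+1) R \ F, with |R ∪ C| > f, |L ∪ C| > f, and |L ∩ F| ≤ |R ∩ F|. Then removing the vertex set T = (Γ(L \ F) ∩ (R ∪ C)) ∪ (L ∩ F), which has size at most ⌊3f/2⌋, disconnects the nonempty set L \ F from the nonempty set (R ∪ C) \ Γ(L \ F): no edge of G joins L \ F to a vertex outside (L \ F) ∪ T except into T. -/

import Mathlib

open Finset

/-- Γ(S): vertices outside `S` with a neighbor in `S`. -/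
def nbhd {V : Type*} [Fintype V] [DecidableEq V] (G : SimpleGraph V) [DecidableRel G.Adj]
    (S : Finset V) : Finset V :=
  Finset.univ.filter (fun v => v ∉ S ∧ ∃ u ∈ S, G.Adj u v)

/-- `T →k S`: `|Γ(S) ∩ T| ≥ k`. -/
def connTo {V : Type*} [Fintype V] [DecidableEq V] (G : SimpleGraph V) [DecidableRel G.Adj]
    (k : ℕ) (T S : Finset V) : Prop :=
  k ≤ (nbhd G S ∩ T).card

/-- `(L, C, R)` is an `F`-partition. -/
def FPartition {V : Type*} [Fintype V] [DecidableEq V] (F L C R : Finset V) : Prop :=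
  Disjoint L C ∧ Disjoint L R ∧ Disjoint C R ∧ L ∪ C ∪ R = Finset.univ ∧
    (L \ F).Nonempty ∧ (R \ F).Nonempty

/-- `G` is `f`-good. -/
def fGood {V : Type*} [Fintype V] [DecidableEq V] (G : SimpleGraph V) [DecidableRel G.Adj]
    (f : ℕ) : Prop :=
  ∀ F L C R : Finset V, F.card ≤ f → FPartition F L C R →
    connTo G (f + 1) (R ∪ C) (L \ F) ∨ connTo G (f + 1) (L ∪ C) (R \ F)

/-- `G` is `k`-connected: more than `k` vertices, and removing fewer than `k`
vertices leaves the graph connected. -/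
def kConnected {V : Type*} [Fintype V] [DecidableEq V] (G : SimpleGraph V) (k : ℕ) : Prop :=
  k < Fintype.card V ∧
    ∀ T : Finset V, T.card < k → ((⊤ : G.Subgraph).deleteVerts ↑T).coe.Connected

section nbhd

variable {V : Type*} [Fintype V] [DecidableEq V] (G : SimpleGraph V) [DecidableRel G.Adj]

@[simp]
theorem mem_nbhd {S : Finset V} {v : V} : v ∈ nbhd G S ↔ v ∉ S ∧ ∃ u ∈ S, G.Adj u v := by
  simp [nbhd]

theorem mem_union_nbhd_of_adj {S : Finset V} {x y : V} (hx : x ∈ S) (hxy : G.Adj x y) :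
    y ∈ S ∪ nbhd G S := by
  by_cases hy : y ∈ S
  · exact mem_union_left _ hy
  · exact mem_union_right _ ((mem_nbhd G).2 ⟨hy, x, hx, hxy⟩)

theorem card_nbhd_inter_le_of_not_connTo {k : ℕ} {T S : Finset V}
    (h : ¬ connTo G (k + 1) T S) : (nbhd G S ∩ T).card ≤ k := by
  rw [connTo, not_le] at h
  omega

theorem nbhd_sdiff_subset {F L C R : Finset V} (huniv : L ∪ C ∪ R = univ) :
    nbhd G (L \ F) ⊆ (nbhd G (L \ F) ∩ (R ∪ C)) ∪ (L ∩ F) := by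
  intro y hy
  have hyV : y ∈ L ∪ C ∪ R := huniv ▸ mem_univ y
  have hyLF : y ∉ L \ F := ((mem_nbhd G).1 hy).1
  simp only [mem_union, mem_inter, mem_sdiff] at hyV hyLF ⊢
  tauto

end nbhd

theorem card_inter_le_half_of_le {α : Type*} [DecidableEq α] {F L R : Finset α}
    (hLR : Disjoint L R) (hle : (L ∩ F).card ≤ (R ∩ F).card) :
    (L ∩ F).card ≤ F.card / 2 := by
  have hdisj : Disjoint (L ∩ F) (R ∩ F) := hLR.mono inter_subset_left inter_subset_left
  have hsub : (L ∩ F) ∪ (R ∩ F) ⊆ F := union_subset inter_subset_right inter_subset_right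
  have := card_le_card hsub
  rw [card_union_of_disjoint hdisj] at this
  omega

theorem sdiff_nonempty_of_card_inter_lt {α : Type*} [DecidableEq α] {s t : Finset α}
    (h : (t ∩ s).card < s.card) : (s \ t).Nonempty := by
  rw [nonempty_iff_ne_empty, Ne, sdiff_eq_empty_iff_subset]
  intro hst
  rw [inter_eq_right.2 hst] at h
  exact lt_irrefl _ h

theorem stmt7_general {V : Type*} [Fintype V] [DecidableEq V] (G : SimpleGraph V) [DecidableRel G.Adj]
    (f : ℕ) (F L C R : Finset V) (hF : F.card ≤ f) (hpart : FPartition F L C R)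
    (h1 : ¬ connTo G (f + 1) (R ∪ C) (L \ F))
    (hRC : f < (R ∪ C).card)
    (hLR : (L ∩ F).card ≤ (R ∩ F).card) :
    ((nbhd G (L \ F) ∩ (R ∪ C)) ∪ (L ∩ F)).card ≤ 3 * f / 2 ∧
    (L \ F).Nonempty ∧ ((R ∪ C) \ nbhd G (L \ F)).Nonempty ∧
    ∀ x ∈ L \ F, ∀ y : V, G.Adj x y →
      y ∈ (L \ F) ∪ ((nbhd G (L \ F) ∩ (R ∪ C)) ∪ (L ∩ F)) := by
  obtain ⟨-, hLRd, -, huniv, hLne, -⟩ := hpart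
  have hN := card_nbhd_inter_le_of_not_connTo G h1
  have hLF := card_inter_le_half_of_le hLRd hLR
  refine ⟨?_, hLne, sdiff_nonempty_of_card_inter_lt (by omega), ?_⟩
  · have := card_union_le (nbhd G (L \ F) ∩ (R ∪ C)) (L ∩ F)
    omega
  · intro x hx y hxy
    exact union_subset_union subset_rfl (nbhd_sdiff_subset G huniv)
      (mem_union_nbhd_of_adj G hx hxy)

theorem stmt7 {V : Type*} [Fintype V] [DecidableEq V] (G : SimpleGraph V) [DecidableRel G.Adj]
    (f : ℕ) (F L C R : Finset V) (hF : F.card ≤ f) (hpart : FPartition F L C R)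
    (h1 : ¬ connTo G (f + 1) (R ∪ C) (L \ F)) (h2 : ¬ connTo G (f + 1) (L ∪ C) (R \ F))
    (hRC : f < (R ∪ C).card) (hLC : f < (L ∪ C).card)
    (hLR : (L ∩ F).card ≤ (R ∩ F).card) :
    ((nbhd G (L \ F) ∩ (R ∪ C)) ∪ (L ∩ F)).card ≤ 3 * f / 2 ∧
    (L \ F).Nonempty ∧ ((R ∪ C) \ nbhd G (L \ F)).Nonempty ∧
    ∀ x ∈ L \ F, ∀ y : V, G.Adj x y →
      y ∈ (L \ F) ∪ ((nbhd G (L \ F) ∩ (R ∪ C)) ∪ (L ∩ F)) :=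
  stmt7_general G f F L C R hF hpart h1 hRC hLR
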